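/- Let TL(T) = L(T) + C(T), where L(T) = 279.69668 + 36000.76892·T + 0.0003025·T², C(T) = (1.919460 − 0.004789·T − 0.000014·T²)·sind(M(T)) + (0.020094 − 0.0001·T)·sind(2·M(T)) + 0.000293·sind(3·M(T)), sind(x) = sin(π·x/180), and M(T) = 358.47583 + 35999.04975·T − 0.000150·T² − 0.0000033·T³. Then for every real y with TL(−10) < y < TL(10), there exists a unique T in the open interval (−10, 10) with TL(T) = y. -/

import Mathlib

/-!
The mean longitude `L` advances by about 36000 degrees per century. The equation of the centre `C`
is a sum of sines of multiples of `M` with amplitudes below 2 degrees, and `M` also advances by about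
36000 degrees per century, so `|C'| ≤ 2 · (π / 180) · 36000 + (small terms) < 2000`. Hence `TL' > 0`
on `[-10, 10]`: `TL` is strictly increasing there, and the intermediate value theorem gives the
unique preimage.
-/

/-- Sine of an angle expressed in degrees. -/
noncomputable def sind (x : ℝ) : ℝ := Real.sin (Real.pi * x / 180)

/-- Mean anomaly of the Sun (degrees), Newcomb's solar theory. -/
noncomputable def M (T : ℝ) : ℝ :=
  358.47583 + 35999.04975 * T - 0.000150 * T ^ 2 - 0.0000033 * T ^ 3

/-- Equation of the Sun's center (degrees). -/
noncomputable def C (T : ℝ) : ℝ :=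
  (1.919460 - 0.004789 * T - 0.000014 * T ^ 2) * sind (M T)
    + (0.020094 - 0.0001 * T) * sind (2 * M T)
    + 0.000293 * sind (3 * M T)

/-- Mean longitude of the Sun (degrees). -/
noncomputable def L (T : ℝ) : ℝ :=
  279.69668 + 36000.76892 * T + 0.0003025 * T ^ 2

/-- True longitude of the Sun (degrees). -/
noncomputable def TL (T : ℝ) : ℝ := L T + C T

open Real Set

theorem StrictMonoOn.existsUnique_mem_Ioo_eq {α δ : Type*} [ConditionallyCompleteLinearOrder α]
    [TopologicalSpace α] [OrderTopology α] [DenselyOrdered α] [LinearOrder δ]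
    [TopologicalSpace δ] [OrderClosedTopology δ] {f : α → δ} {a b : α} {y : δ}
    (hf : StrictMonoOn f (Icc a b)) (hab : a ≤ b) (hcont : ContinuousOn f (Icc a b))
    (hy : y ∈ Ioo (f a) (f b)) : ∃! x, x ∈ Ioo a b ∧ f x = y := by
  obtain ⟨x, hx, rfl⟩ := intermediate_value_Ioo hab hcont hy
  exact ⟨x, ⟨hx, rfl⟩, fun x' ⟨hx', hfx'⟩ =>
    hf.injOn (Ioo_subset_Icc_self hx') (Ioo_subset_Icc_self hx) hfx'⟩

theorem HasDerivAt.exists_mul_sind_abs_le {a m : ℝ → ℝ} {a' m' x A A' B : ℝ}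
    (ha : HasDerivAt a a' x) (hm : HasDerivAt m m' x)
    (hA : |a x| ≤ A) (hA' : |a'| ≤ A') (hB : |m'| ≤ B) :
    ∃ d, HasDerivAt (fun t => a t * sind (m t)) d x ∧ |d| ≤ A' + π / 180 * A * B := by
  have hsind : HasDerivAt (fun t => sind (m t)) (Real.cos (π * m x / 180) * (π * m' / 180)) x :=
    ((hm.const_mul π).div_const 180).sin
  refine ⟨_, ha.mul hsind, ?_⟩
  have hsin : |sind (m x)| ≤ 1 := abs_sin_le_one _
  have hcos : |Real.cos (π * m x / 180)| ≤ 1 := abs_cos_le_one _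
  have hrate : |π * m' / 180| ≤ π / 180 * B := by
    rw [abs_div, abs_mul, abs_of_pos pi_pos, abs_of_pos (by norm_num : (0 : ℝ) < 180)]
    linarith [mul_le_mul_of_nonneg_left hB pi_pos.le]
  calc |a' * sind (m x) + a x * (Real.cos (π * m x / 180) * (π * m' / 180))|
      ≤ |a'| * |sind (m x)| + |a x| * (|Real.cos (π * m x / 180)| * |π * m' / 180|) := by
        simpa only [abs_mul] using abs_add_le (a' * sind (m x))
          (a x * (Real.cos (π * m x / 180) * (π * m' / 180)))
    _ ≤ A' * 1 + A * (1 * (π / 180 * B)) := by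
        gcongr
        exacts [(abs_nonneg a').trans hA', (abs_nonneg (a x)).trans hA]
    _ = A' + π / 180 * A * B := by ring

theorem hasDerivAt_M (T : ℝ) :
    HasDerivAt M (35999.04975 - 0.0003 * T - 0.0000099 * T ^ 2) T := by
  refine (((((hasDerivAt_id' T).const_mul 35999.04975).const_add 358.47583).sub
    ((hasDerivAt_pow 2 T).const_mul 0.000150)).sub
      ((hasDerivAt_pow 3 T).const_mul 0.0000033)).congr_deriv ?_
  norm_num
  ring

theorem hasDerivAt_L (T : ℝ) : HasDerivAt L (36000.76892 + 0.000605 * T) T := by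
  refine ((((hasDerivAt_id' T).const_mul 36000.76892).const_add 279.69668).add
    ((hasDerivAt_pow 2 T).const_mul 0.0003025)).congr_deriv ?_
  norm_num
  ring

theorem exists_hasDerivAt_C_abs_le {T : ℝ} (hT : T ∈ Icc (-10 : ℝ) 10) :
    ∃ d, HasDerivAt C d T ∧ |d| ≤ 2000 := by
  obtain ⟨hT₁, hT₂⟩ := hT
  have hM := hasDerivAt_M T
  have hrate : |35999.04975 - 0.0003 * T - 0.0000099 * T ^ 2| ≤ 36000 := by
    rw [abs_le]; constructor <;> nlinarith
  have hrate_mul (k : ℝ) (hk : 0 ≤ k) :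
      |k * (35999.04975 - 0.0003 * T - 0.0000099 * T ^ 2)| ≤ k * 36000 := by
    rw [abs_mul, abs_of_nonneg hk]; gcongr
  have ha₁ : HasDerivAt (fun t => 1.919460 - 0.004789 * t - 0.000014 * t ^ 2)
      (-0.004789 - 0.000028 * T) T := by
    refine ((((hasDerivAt_id' T).const_mul 0.004789).const_sub 1.919460).sub
      ((hasDerivAt_pow 2 T).const_mul 0.000014)).congr_deriv ?_
    norm_num
    ring
  have ha₂ : HasDerivAt (fun t => 0.020094 - 0.0001 * t) (-0.0001) T := by
    simpa using ((hasDerivAt_id' T).const_mul 0.0001).const_sub 0.020094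
  obtain ⟨d₁, hd₁, hd₁_le⟩ := ha₁.exists_mul_sind_abs_le hM (A := 2) (A' := 0.01)
    (by rw [abs_le]; constructor <;> nlinarith) (by rw [abs_le]; constructor <;> linarith)
    hrate
  obtain ⟨d₂, hd₂, hd₂_le⟩ := ha₂.exists_mul_sind_abs_le (hM.const_mul 2) (A := 0.03) (A' := 0.0001)
    (by rw [abs_le]; constructor <;> nlinarith) (by norm_num) (hrate_mul 2 (by norm_num))
  obtain ⟨d₃, hd₃, hd₃_le⟩ := (hasDerivAt_const T (0.000293 : ℝ)).exists_mul_sind_abs_le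
    (hM.const_mul 3) (A := 0.0003) (A' := 0) (by norm_num) (by norm_num) (hrate_mul 3 (by norm_num))
  refine ⟨d₁ + d₂ + d₃, (hd₁.add hd₂).add hd₃, ?_⟩
  calc |d₁ + d₂ + d₃| ≤ |d₁| + |d₂| + |d₃| := abs_add_three d₁ d₂ d₃
    _ ≤ 2000 := by linarith [pi_le_four]

theorem exists_hasDerivAt_TL_pos {T : ℝ} (hT : T ∈ Icc (-10 : ℝ) 10) :
    ∃ d, HasDerivAt TL d T ∧ 0 < d := by
  obtain ⟨c, hc, hc_le⟩ := exists_hasDerivAt_C_abs_le hT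
  refine ⟨_, (hasDerivAt_L T).add hc, ?_⟩
  linarith [neg_abs_le c, hT.1]

theorem continuous_TL : Continuous TL := by
  unfold TL L C M sind
  fun_prop

theorem strictMonoOn_TL : StrictMonoOn TL (Icc (-10) 10) :=
  strictMonoOn_of_deriv_pos (convex_Icc _ _) continuous_TL.continuousOn fun T hT => by
    rw [interior_Icc] at hT
    obtain ⟨d, hd, hd_pos⟩ := exists_hasDerivAt_TL_pos (Ioo_subset_Icc_self hT)
    rwa [hd.deriv]

theorem TL_exists_unique_preimage (y : ℝ) (h1 : TL (-10) < y) (h2 : y < TL 10) :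
    ∃! T : ℝ, T ∈ Set.Ioo (-10 : ℝ) 10 ∧ TL T = y :=
  strictMonoOn_TL.existsUnique_mem_Ioo_eq (by norm_num) continuous_TL.continuousOn ⟨h1, h2⟩
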